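/- For every natural number d, the K-vector space dimension of the degree-d graded piece of R ⧸ I(m,n,r), i.e. the finrank over K of the image of the submodule of homogeneous polynomials of total degree d of R under the quotient map R → R ⧸ I(m,n,r), equals C(m−1+d, d)·C(n−1+d, d)·C(r−1+d, d), where C(a,b) denotes the binomial coefficient. -/

import Mathlib

open MvPolynomial

/-- The generators of the double determinantal ideal `I(m,n,r)` (2-minors of the
horizontal and vertical concatenations of the generic matrices `X_1, …, X_r`). -/
def ddGens (K : Type*) [Field K] (m n r : ℕ) :
    Set (MvPolynomial (Fin m × Fin n × Fin r) K) :=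
  {f | (∃ i i' : Fin m, ∃ j j' : Fin n, ∃ k : Fin r, i < i' ∧ j < j' ∧
          f = X (i, j, k) * X (i', j', k) - X (i, j', k) * X (i', j, k)) ∨
       (∃ i i' : Fin m, ∃ j j' : Fin n, ∃ k k' : Fin r, i < i' ∧ k < k' ∧
          f = X (i, j, k) * X (i', j', k') - X (i, j', k') * X (i', j, k)) ∨
       (∃ i i' : Fin m, ∃ j j' : Fin n, ∃ k k' : Fin r, j < j' ∧ k < k' ∧
          f = X (i, j, k) * X (i', j', k') - X (i, j', k) * X (i', j, k'))}

/-- The double determinantal ideal `I(m,n,r)`. -/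
noncomputable def ddIdeal (K : Type*) [Field K] (m n r : ℕ) :
    Ideal (MvPolynomial (Fin m × Fin n × Fin r) K) :=
  Ideal.span (ddGens K m n r)

namespace DD

lemma mem_of_eq {A : Type*} [CommRing A] {I : Ideal A} {x y : A} (h : x = y) (hy : y ∈ I) :
    x ∈ I := h ▸ hy

variable {K : Type*} [Field K] {m n r : ℕ}

/-- The toric map. -/
noncomputable def phi (K : Type*) [Field K] (m n r : ℕ) :
    MvPolynomial (Fin m × Fin n × Fin r) K →ₐ[K] MvPolynomial (Fin m ⊕ Fin n ⊕ Fin r) K :=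
  aeval fun p => X (Sum.inl p.1) * X (Sum.inr (Sum.inl p.2.1)) * X (Sum.inr (Sum.inr p.2.2))

lemma phi_X (p : Fin m × Fin n × Fin r) :
    phi K m n r (X p) =
      X (Sum.inl p.1) * X (Sum.inr (Sum.inl p.2.1)) * X (Sum.inr (Sum.inr p.2.2)) := by
  simp [phi]

lemma ideal_le_ker : ddIdeal K m n r ≤ RingHom.ker (phi K m n r) := by
  rw [ddIdeal, Ideal.span_le]
  rintro f (⟨i, i', j, j', k, _, _, rfl⟩ | ⟨i, i', j, j', k, k', _, _, rfl⟩ |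
    ⟨i, i', j, j', k, k', _, _, rfl⟩) <;>
    simp only [SetLike.mem_coe, RingHom.mem_ker, map_sub, map_mul, phi_X] <;> ring

lemma memJ1 {a b : Fin m} {p q : Fin n} (c : Fin r) (hab : a < b) (hpq : p < q) :
    X (a,p,c) * X (b,q,c) - X (a,q,c) * X (b,p,c) ∈ ddIdeal K m n r :=
  Ideal.subset_span (Or.inl ⟨a, b, p, q, c, hab, hpq, rfl⟩)

lemma memI2 {a b : Fin m} (p q : Fin n) {c e : Fin r} (hab : a < b) (hce : c < e) :
    X (a,p,c) * X (b,q,e) - X (a,q,e) * X (b,p,c) ∈ ddIdeal K m n r :=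
  Ideal.subset_span (Or.inr (Or.inl ⟨a, b, p, q, c, e, hab, hce, rfl⟩))

lemma memJ3 (a b : Fin m) {p q : Fin n} {c e : Fin r} (hpq : p < q) (hce : c < e) :
    X (a,p,c) * X (b,q,e) - X (a,q,c) * X (b,p,e) ∈ ddIdeal K m n r :=
  Ideal.subset_span (Or.inr (Or.inr ⟨a, b, p, q, c, e, hpq, hce, rfl⟩))

/-- swap of the second coordinates of two factors. -/
lemma swapJ (a b : Fin m) (p q : Fin n) (c e : Fin r) :
    X (a,p,c) * X (b,q,e) - X (a,q,c) * X (b,p,e) ∈ ddIdeal K m n r := by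
  rcases lt_trichotomy c e with hce | rfl | hce
  · rcases lt_trichotomy p q with hpq | rfl | hpq
    · exact memJ3 a b hpq hce
    · exact mem_of_eq (by ring) (zero_mem _)
    · exact mem_of_eq (by ring) (neg_mem (memJ3 a b hpq hce))
  · rcases eq_or_ne a b with rfl | hab
    · exact mem_of_eq (by ring) (zero_mem _)
    rcases eq_or_ne p q with rfl | hpq
    · exact mem_of_eq (by ring) (zero_mem _)
    rcases hab.lt_or_gt with h | h
    · rcases hpq.lt_or_gt with h' | h'
      · exact memJ1 c h h'
      · exact mem_of_eq (by ring) (neg_mem (memJ1 c h h'))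
    · rcases hpq.lt_or_gt with h' | h'
      · exact mem_of_eq (by ring) (neg_mem (memJ1 c h h'))
      · exact mem_of_eq (by ring) (memJ1 c h h')
  · rcases lt_trichotomy p q with hpq | rfl | hpq
    · exact mem_of_eq (by ring) (neg_mem (memJ3 b a hpq hce))
    · exact mem_of_eq (by ring) (zero_mem _)
    · exact mem_of_eq (by ring) (memJ3 b a hpq hce)

/-- swap of the first coordinates of two factors. -/
lemma swapI (a b : Fin m) (p q : Fin n) (c e : Fin r) :
    X (a,p,c) * X (b,q,e) - X (b,p,c) * X (a,q,e) ∈ ddIdeal K m n r := by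
  rcases eq_or_ne a b with rfl | hab
  · exact mem_of_eq (by ring) (zero_mem _)
  rcases lt_trichotomy c e with hce | rfl | hce
  · rcases hab.lt_or_gt with h | h
    · exact mem_of_eq (by ring) (memI2 p q h hce)
    · exact mem_of_eq (by ring) (neg_mem (memI2 p q h hce))
  · -- same k: this is a j-swap in disguise
    exact mem_of_eq (by ring) (swapJ a b p q c c)
  · rcases hab.lt_or_gt with h | h
    · exact mem_of_eq (by ring) (neg_mem (memI2 q p h hce))
    · exact mem_of_eq (by ring) (memI2 q p h hce)

/-- swap of the third coordinates of two factors. -/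
lemma swapK (a b : Fin m) (p q : Fin n) (c e : Fin r) :
    X (a,p,c) * X (b,q,e) - X (a,p,e) * X (b,q,c) ∈ ddIdeal K m n r :=
  mem_of_eq (by ring)
    (add_mem (swapI a b p q c e) (swapJ b a p q c e))


variable {K : Type*} [Field K] {m n r : ℕ}

local notation "T'" => (Fin m × Fin n × Fin r)

/-- product of variables over a multiset of indices -/
noncomputable def Pr (K : Type*) [Field K] {m n r : ℕ} (s : Multiset (Fin m × Fin n × Fin r)) :
    MvPolynomial (Fin m × Fin n × Fin r) K :=
  (s.map X).prod

lemma Pr_cons (p : T') (s : Multiset T') : Pr K (p ::ₘ s) = X p * Pr K s := by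
  simp [Pr]

/-- Gathering: if the marginals of `t` contain the coordinates of `p`, then modulo the ideal
`t` can be modified (keeping marginals) so as to contain `p`. -/
lemma gather (t : Multiset T') (p : T') (hi : p.1 ∈ t.map (·.1))
    (hj : p.2.1 ∈ t.map (·.2.1)) (hk : p.2.2 ∈ t.map (·.2.2)) :
    ∃ t' : Multiset T', t'.map (·.1) = t.map (·.1) ∧ t'.map (·.2.1) = t.map (·.2.1) ∧
      t'.map (·.2.2) = t.map (·.2.2) ∧ Pr K t - Pr K t' ∈ ddIdeal K m n r ∧ p ∈ t' := by
  obtain ⟨i, j, k⟩ := p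
  simp only at hi hj hk
  -- Step 1: produce t1 containing (i, j, c) for some c
  have step1 : ∃ t1 : Multiset T', t1.map (·.1) = t.map (·.1) ∧
      t1.map (·.2.1) = t.map (·.2.1) ∧ t1.map (·.2.2) = t.map (·.2.2) ∧
      Pr K t - Pr K t1 ∈ ddIdeal K m n r ∧ ∃ c, (i, j, c) ∈ t1 := by
    obtain ⟨⟨a1, b1, c1⟩, hq1t, hq11⟩ := Multiset.mem_map.1 hi
    simp only at hq11
    rw [hq11] at hq1t
    by_cases hb : b1 = j
    · subst hb; exact ⟨t, rfl, rfl, rfl, by simp, c1, hq1t⟩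
    · obtain ⟨⟨a2, b2, c2⟩, hq2t, hq22⟩ := Multiset.mem_map.1 hj
      simp only at hq22
      rw [hq22] at hq2t
      have hne : ((a2, j, c2) : T') ≠ (i, b1, c1) := by
        simp only [ne_eq, Prod.mk.injEq, not_and]
        intro _ h _; exact hb h.symm
      have hv : ((a2, j, c2) : T') ∈ t.erase (i, b1, c1) :=
        (Multiset.mem_erase_of_ne hne).2 hq2t
      set rest := (t.erase (i, b1, c1)).erase (a2, j, c2) with hrest
      have ht : t = (i, b1, c1) ::ₘ (a2, j, c2) ::ₘ rest := by
        rw [Multiset.cons_erase hv, Multiset.cons_erase hq1t]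
      refine ⟨(i, j, c1) ::ₘ (a2, b1, c2) ::ₘ rest, ?_, ?_, ?_, ?_, c1, by simp⟩
      · rw [ht]; simp
      · rw [ht]; simp only [Multiset.map_cons]; exact Multiset.cons_swap _ _ _
      · rw [ht]; simp
      · rw [ht, Pr_cons, Pr_cons, Pr_cons, Pr_cons]
        exact mem_of_eq (by ring)
          (Ideal.mul_mem_right (Pr K rest) _ (swapJ i a2 b1 j c1 c2))
  obtain ⟨t1, h1, h2, h3, hP, c, hc⟩ := step1
  -- Step 2: fix the third coordinate
  by_cases hck : c = k
  · exact ⟨t1, h1, h2, h3, hP, by rw [hck] at hc; exact hc⟩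
  · have hk1 : k ∈ t1.map (·.2.2) := by rw [h3]; exact hk
    obtain ⟨⟨a3, b3, c3⟩, hq3t, hq33⟩ := Multiset.mem_map.1 hk1
    simp only at hq33
    rw [hq33] at hq3t
    have hne : ((a3, b3, k) : T') ≠ (i, j, c) := by
      simp only [ne_eq, Prod.mk.injEq, not_and]
      intro _ _ h; exact hck h.symm
    have hv : ((a3, b3, k) : T') ∈ t1.erase (i, j, c) := (Multiset.mem_erase_of_ne hne).2 hq3t
    set rest := (t1.erase (i, j, c)).erase (a3, b3, k) with hrest
    have ht : t1 = (i, j, c) ::ₘ (a3, b3, k) ::ₘ rest := by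
      rw [Multiset.cons_erase hv, Multiset.cons_erase hc]
    refine ⟨(i, j, k) ::ₘ (a3, b3, c) ::ₘ rest, ?_, ?_, ?_, ?_, by simp⟩
    · rw [← h1, ht]; simp
    · rw [← h2, ht]; simp
    · rw [← h3, ht]; simp only [Multiset.map_cons]; exact Multiset.cons_swap _ _ _
    · have h2step : Pr K t1 - Pr K ((i, j, k) ::ₘ (a3, b3, c) ::ₘ rest) ∈ ddIdeal K m n r := by
        rw [ht, Pr_cons, Pr_cons, Pr_cons, Pr_cons]
        exact mem_of_eq (by ring)
          (Ideal.mul_mem_right (Pr K rest) _ (swapK i a3 j b3 c k))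
      exact mem_of_eq (by ring) (add_mem hP h2step)

/-- Main congruence: products with equal marginals agree modulo the ideal. -/
lemma cong (N : ℕ) : ∀ s t : Multiset T', Multiset.card s = N →
    s.map (·.1) = t.map (·.1) → s.map (·.2.1) = t.map (·.2.1) →
    s.map (·.2.2) = t.map (·.2.2) → Pr K s - Pr K t ∈ ddIdeal K m n r := by
  induction N with
  | zero =>
    intro s t hcard h1 _ _
    have hs : s = 0 := Multiset.card_eq_zero.1 hcard
    subst hs
    have h0 : t.map (·.1) = 0 := by rw [← h1]; simp
    have ht : t = 0 := by
      by_contra hne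
      obtain ⟨a, ha⟩ := Multiset.exists_mem_of_ne_zero hne
      exact absurd (Multiset.mem_map_of_mem _ ha) (by rw [h0]; simp)
    subst ht; simp
  | succ N ih =>
    intro s t hcard h1 h2 h3
    obtain ⟨p, s', rfl⟩ : ∃ p s', s = p ::ₘ s' := by
      by_cases h : s = 0
      · subst h; simp at hcard
      · obtain ⟨a, ha⟩ := Multiset.exists_mem_of_ne_zero h
        exact ⟨a, s.erase a, (Multiset.cons_erase ha).symm⟩
    have hi : p.1 ∈ t.map (·.1) := by
      rw [← h1]; exact Multiset.mem_map_of_mem _ (Multiset.mem_cons_self _ _)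
    have hj : p.2.1 ∈ t.map (·.2.1) := by
      rw [← h2]; exact Multiset.mem_map_of_mem _ (Multiset.mem_cons_self _ _)
    have hk : p.2.2 ∈ t.map (·.2.2) := by
      rw [← h3]; exact Multiset.mem_map_of_mem _ (Multiset.mem_cons_self _ _)
    obtain ⟨t', g1, g2, g3, gP, hp⟩ := gather (K := K) t p hi hj hk
    obtain ⟨rest, rfl⟩ : ∃ rest, t' = p ::ₘ rest := ⟨t'.erase p, (Multiset.cons_erase hp).symm⟩
    have e1 : s'.map (·.1) = rest.map (·.1) := by
      have := h1.trans g1.symm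
      simpa using (Multiset.cons_inj_right p.1).1 (by simpa using this)
    have e2 : s'.map (·.2.1) = rest.map (·.2.1) := by
      have := h2.trans g2.symm
      simpa using (Multiset.cons_inj_right p.2.1).1 (by simpa using this)
    have e3 : s'.map (·.2.2) = rest.map (·.2.2) := by
      have := h3.trans g3.symm
      simpa using (Multiset.cons_inj_right p.2.2).1 (by simpa using this)
    have hcard' : Multiset.card s' = N := by simpa using hcard
    have hIH := ih s' rest hcard' e1 e2 e3
    rw [Pr_cons]
    exact mem_of_eq
      (show X p * Pr K s' - Pr K t =
        X p * (Pr K s' - Pr K rest) + -(Pr K t - (X p * Pr K rest)) by ring)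
      (add_mem (Ideal.mul_mem_left _ _ hIH) (neg_mem (by rw [← Pr_cons]; exact gP)))


open Finsupp in
/-- first marginal of an exponent vector -/
noncomputable def mar1 (μ : (Fin m × Fin n × Fin r) →₀ ℕ) : Fin m →₀ ℕ :=
  μ.mapDomain (·.1)

open Finsupp in
noncomputable def mar2 (μ : (Fin m × Fin n × Fin r) →₀ ℕ) : Fin n →₀ ℕ :=
  μ.mapDomain (·.2.1)

open Finsupp in
noncomputable def mar3 (μ : (Fin m × Fin n × Fin r) →₀ ℕ) : Fin r →₀ ℕ :=
  μ.mapDomain (·.2.2)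

open Finsupp in
/-- embed a triple of exponent vectors into exponents on the disjoint union -/
noncomputable def emb (a : Fin m →₀ ℕ) (b : Fin n →₀ ℕ) (c : Fin r →₀ ℕ) :
    (Fin m ⊕ Fin n ⊕ Fin r) →₀ ℕ :=
  a.mapDomain Sum.inl + b.mapDomain (Sum.inr ∘ Sum.inl) + c.mapDomain (Sum.inr ∘ Sum.inr)

open Finsupp in
noncomputable def EE (μ : (Fin m × Fin n × Fin r) →₀ ℕ) : (Fin m ⊕ Fin n ⊕ Fin r) →₀ ℕ :=
  emb (mar1 μ) (mar2 μ) (mar3 μ)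

lemma emb_apply_inl (a : Fin m →₀ ℕ) (b : Fin n →₀ ℕ) (c : Fin r →₀ ℕ) (i : Fin m) :
    emb a b c (Sum.inl i) = a i := by
  have h1 : Finsupp.mapDomain (Sum.inr ∘ Sum.inl : Fin n → Fin m ⊕ Fin n ⊕ Fin r) b
      (Sum.inl i) = 0 :=
    Finsupp.mapDomain_notin_range _ _ (by simp [Set.range, Function.comp])
  have h2 : Finsupp.mapDomain (Sum.inr ∘ Sum.inr : Fin r → Fin m ⊕ Fin n ⊕ Fin r) c
      (Sum.inl i) = 0 :=
    Finsupp.mapDomain_notin_range _ _ (by simp [Set.range, Function.comp])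
  simp [emb, Finsupp.mapDomain_apply Sum.inl_injective, h1, h2]

lemma emb_apply_inrl (a : Fin m →₀ ℕ) (b : Fin n →₀ ℕ) (c : Fin r →₀ ℕ) (j : Fin n) :
    emb a b c (Sum.inr (Sum.inl j)) = b j := by
  have h1 : Finsupp.mapDomain (Sum.inl : Fin m → Fin m ⊕ Fin n ⊕ Fin r) a
      (Sum.inr (Sum.inl j)) = 0 :=
    Finsupp.mapDomain_notin_range _ _ (by simp)
  have h2 : Finsupp.mapDomain (Sum.inr ∘ Sum.inr : Fin r → Fin m ⊕ Fin n ⊕ Fin r) c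
      (Sum.inr (Sum.inl j)) = 0 :=
    Finsupp.mapDomain_notin_range _ _ (by simp [Set.range, Function.comp])
  have h3 : Finsupp.mapDomain (Sum.inr ∘ Sum.inl : Fin n → Fin m ⊕ Fin n ⊕ Fin r) b
      (Sum.inr (Sum.inl j)) = b j :=
    Finsupp.mapDomain_apply (Sum.inr_injective.comp Sum.inl_injective) _ _
  simp [emb, h1, h2, h3]

lemma emb_apply_inrr (a : Fin m →₀ ℕ) (b : Fin n →₀ ℕ) (c : Fin r →₀ ℕ) (k : Fin r) :
    emb a b c (Sum.inr (Sum.inr k)) = c k := by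
  have h1 : Finsupp.mapDomain (Sum.inl : Fin m → Fin m ⊕ Fin n ⊕ Fin r) a
      (Sum.inr (Sum.inr k)) = 0 :=
    Finsupp.mapDomain_notin_range _ _ (by simp)
  have h2 : Finsupp.mapDomain (Sum.inr ∘ Sum.inl : Fin n → Fin m ⊕ Fin n ⊕ Fin r) b
      (Sum.inr (Sum.inr k)) = 0 :=
    Finsupp.mapDomain_notin_range _ _ (by simp [Set.range, Function.comp])
  have h3 : Finsupp.mapDomain (Sum.inr ∘ Sum.inr : Fin r → Fin m ⊕ Fin n ⊕ Fin r) c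
      (Sum.inr (Sum.inr k)) = c k :=
    Finsupp.mapDomain_apply (Sum.inr_injective.comp Sum.inr_injective) _ _
  simp [emb, h1, h2, h3]

lemma emb_inj {a a' : Fin m →₀ ℕ} {b b' : Fin n →₀ ℕ} {c c' : Fin r →₀ ℕ}
    (h : emb a b c = emb a' b' c') : a = a' ∧ b = b' ∧ c = c' := by
  refine ⟨Finsupp.ext fun i => ?_, Finsupp.ext fun j => ?_, Finsupp.ext fun k => ?_⟩
  · rw [← emb_apply_inl a b c i, ← emb_apply_inl a' b' c' i, h]
  · rw [← emb_apply_inrl a b c j, ← emb_apply_inrl a' b' c' j, h]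
  · rw [← emb_apply_inrr a b c k, ← emb_apply_inrr a' b' c' k, h]

lemma EE_eq_imp {μ ν : (Fin m × Fin n × Fin r) →₀ ℕ} (h : EE μ = EE ν) :
    mar1 μ = mar1 ν ∧ mar2 μ = mar2 ν ∧ mar3 μ = mar3 ν := emb_inj h

/-- the product over the multiset attached to `μ` is the monomial `X^μ`. -/
lemma Pr_toMultiset (μ : (Fin m × Fin n × Fin r) →₀ ℕ) :
    Pr K μ.toMultiset = monomial μ (1 : K) := by
  rw [Pr, Finsupp.toMultiset_map, Finsupp.prod_toMultiset,
    Finsupp.prod_mapDomain_index_inj (X_injective), monomial_eq, map_one, one_mul]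

lemma marginal_multiset1 (μ : (Fin m × Fin n × Fin r) →₀ ℕ) :
    μ.toMultiset.map (·.1) = (mar1 μ).toMultiset := Finsupp.toMultiset_map _ _

lemma marginal_multiset2 (μ : (Fin m × Fin n × Fin r) →₀ ℕ) :
    μ.toMultiset.map (·.2.1) = (mar2 μ).toMultiset := Finsupp.toMultiset_map _ _

lemma marginal_multiset3 (μ : (Fin m × Fin n × Fin r) →₀ ℕ) :
    μ.toMultiset.map (·.2.2) = (mar3 μ).toMultiset := Finsupp.toMultiset_map _ _

/-- monomials with equal marginals agree mod the ideal. -/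
lemma monomial_cong {μ ν : (Fin m × Fin n × Fin r) →₀ ℕ} (h : EE μ = EE ν) :
    monomial μ (1 : K) - monomial ν 1 ∈ ddIdeal K m n r := by
  obtain ⟨h1, h2, h3⟩ := EE_eq_imp h
  rw [← Pr_toMultiset, ← Pr_toMultiset]
  exact cong (Multiset.card μ.toMultiset) _ _ rfl
    (by rw [marginal_multiset1, marginal_multiset1, h1])
    (by rw [marginal_multiset2, marginal_multiset2, h2])
    (by rw [marginal_multiset3, marginal_multiset3, h3])

lemma EE_add (μ ν : (Fin m × Fin n × Fin r) →₀ ℕ) : EE (μ + ν) = EE μ + EE ν := by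
  simp only [EE, mar1, mar2, mar3, emb, Finsupp.mapDomain_add]
  abel

lemma EE_single (p : Fin m × Fin n × Fin r) (e : ℕ) :
    EE (Finsupp.single p e) = Finsupp.single (Sum.inl p.1) e +
      Finsupp.single (Sum.inr (Sum.inl p.2.1)) e + Finsupp.single (Sum.inr (Sum.inr p.2.2)) e := by
  simp [EE, mar1, mar2, mar3, emb, Finsupp.mapDomain_single, Function.comp]

/-- `phi` maps `X^μ` to the monomial with exponent `EE μ`. -/
lemma phi_monomial (μ : (Fin m × Fin n × Fin r) →₀ ℕ) :
    phi K m n r (monomial μ 1) = monomial (EE μ) 1 := by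
  induction μ using Finsupp.induction with
  | zero =>
    simp only [monomial_zero', map_one, EE, mar1, mar2, mar3, emb]
    simp [Finsupp.mapDomain_zero]
  | single_add p e f hpf he ih =>
    have hsplit : monomial (Finsupp.single p e + f) (1 : K) =
        monomial (Finsupp.single p e) 1 * monomial f 1 := by
      rw [monomial_mul, one_mul]
    rw [hsplit, map_mul, ih, EE_add, ← X_pow_eq_monomial, map_pow, phi_X, EE_single]
    rw [show (X (Sum.inl p.1) * X (Sum.inr (Sum.inl p.2.1)) * X (Sum.inr (Sum.inr p.2.2)) :
        MvPolynomial (Fin m ⊕ Fin n ⊕ Fin r) K) ^ e =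
      X (Sum.inl p.1) ^ e * X (Sum.inr (Sum.inl p.2.1)) ^ e * X (Sum.inr (Sum.inr p.2.2)) ^ e
      by ring]
    rw [X_pow_eq_monomial, X_pow_eq_monomial, X_pow_eq_monomial, monomial_mul, monomial_mul,
      monomial_mul, one_mul, one_mul, one_mul]

/-- The kernel of `phi` is contained in the double determinantal ideal. -/
lemma ker_le (f : MvPolynomial (Fin m × Fin n × Fin r) K) (h0 : phi K m n r f = 0) :
    f ∈ ddIdeal K m n r := by
  classical
  set mk := Ideal.Quotient.mkₐ K (ddIdeal K m n r) with hmk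
  suffices h : mk f = 0 by
    rw [hmk, Ideal.Quotient.mkₐ_eq_mk] at h
    exact Ideal.Quotient.eq_zero_iff_mem.1 h
  set s := f.support with hs
  -- the fiberwise coefficient sums vanish
  have hfib : ∀ e, ∑ μ ∈ s.filter (fun μ => EE μ = e), coeff μ f = 0 := by
    intro e
    have hphi : phi K m n r f = ∑ μ ∈ s, monomial (EE μ) (coeff μ f) := by
      conv_lhs => rw [← support_sum_monomial_coeff f]
      rw [map_sum]
      refine Finset.sum_congr rfl fun μ _ => ?_
      have : monomial μ (coeff μ f) = coeff μ f • monomial μ (1 : K) := by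
        rw [smul_monomial, smul_eq_mul, mul_one]
      rw [this, map_smul, phi_monomial, smul_monomial, smul_eq_mul, mul_one]
    have := congrArg (coeff e) hphi
    rw [h0] at this
    simp only [coeff_zero, coeff_sum, coeff_monomial] at this
    rw [Finset.sum_filter]
    exact this.symm
  -- a choice of representative in each fiber
  set v : ((Fin m ⊕ Fin n ⊕ Fin r) →₀ ℕ) → (MvPolynomial (Fin m × Fin n × Fin r) K ⧸
      ddIdeal K m n r) := fun e =>
    if h : ∃ μ, μ ∈ s ∧ EE μ = e then mk (monomial h.choose 1) else 0 with hv
  have hval : ∀ μ ∈ s, mk (monomial μ 1) = v (EE μ) := by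
    intro μ hμ
    have hex : ∃ ν, ν ∈ s ∧ EE ν = EE μ := ⟨μ, hμ, rfl⟩
    rw [hv]
    simp only [dif_pos hex]
    rw [hmk, Ideal.Quotient.mkₐ_eq_mk, Ideal.Quotient.eq]
    exact monomial_cong hex.choose_spec.2.symm
  have key : mk f = ∑ μ ∈ s, coeff μ f • v (EE μ) := by
    conv_lhs => rw [← support_sum_monomial_coeff f]
    rw [map_sum]
    refine Finset.sum_congr rfl fun μ hμ => ?_
    have : monomial μ (coeff μ f) = coeff μ f • monomial μ (1 : K) := by
      rw [smul_monomial, smul_eq_mul, mul_one]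
    rw [this, map_smul, hval μ hμ]
  rw [key, ← Finset.sum_fiberwise_of_maps_to (g := EE) (t := s.image EE)
    (fun μ hμ => Finset.mem_image_of_mem _ hμ)]
  refine Finset.sum_eq_zero fun e he => ?_
  have : ∀ μ ∈ s.filter (fun μ => EE μ = e), coeff μ f • v (EE μ) = coeff μ f • v e := by
    intro μ hμ
    rw [(Finset.mem_filter.1 hμ).2]
  rw [Finset.sum_congr rfl this, ← Finset.sum_smul, hfib e, zero_smul]


/-- The induced map on the quotient. -/
noncomputable def psi (K : Type*) [Field K] (m n r : ℕ) :
    (MvPolynomial (Fin m × Fin n × Fin r) K ⧸ ddIdeal K m n r) →ₐ[K]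
      MvPolynomial (Fin m ⊕ Fin n ⊕ Fin r) K :=
  Ideal.Quotient.liftₐ _ (phi K m n r) (fun _ ha => RingHom.mem_ker.1 (ideal_le_ker ha))

lemma psi_mk (x : MvPolynomial (Fin m × Fin n × Fin r) K) :
    psi K m n r (Ideal.Quotient.mkₐ K (ddIdeal K m n r) x) = phi K m n r x := by
  rw [psi, Ideal.Quotient.mkₐ_eq_mk, Ideal.Quotient.liftₐ_apply]
  rfl

lemma finrank_Q_eq (d : ℕ) :
    Module.finrank K (Submodule.map (Ideal.Quotient.mkₐ K (ddIdeal K m n r)).toLinearMap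
      (homogeneousSubmodule (Fin m × Fin n × Fin r) K d)) =
    Module.finrank K (Submodule.map (phi K m n r).toLinearMap
      (homogeneousSubmodule (Fin m × Fin n × Fin r) K d)) := by
  set Hd := homogeneousSubmodule (Fin m × Fin n × Fin r) K d
  set Qd := Submodule.map (Ideal.Quotient.mkₐ K (ddIdeal K m n r)).toLinearMap Hd with hQd
  have hmap : Submodule.map (psi K m n r).toLinearMap Qd =
      Submodule.map (phi K m n r).toLinearMap Hd := by
    rw [hQd, ← Submodule.map_comp]
    congr 1

  have hinj : Function.Injective ((psi K m n r).toLinearMap.submoduleMap Qd) := by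
    rw [injective_iff_map_eq_zero]
    rintro ⟨x, hx⟩ h0
    obtain ⟨y, hy, rfl⟩ := hx
    have hval : phi K m n r y = 0 := by
      have h1 := congrArg Subtype.val h0
      rw [← psi_mk]
      simpa [LinearMap.submoduleMap_coe_apply, AlgHom.toLinearMap_apply] using h1
    have hyI : y ∈ ddIdeal K m n r := ker_le y hval
    apply Subtype.ext
    show Ideal.Quotient.mkₐ K (ddIdeal K m n r) y = 0
    rw [Ideal.Quotient.mkₐ_eq_mk, Ideal.Quotient.eq_zero_iff_mem]
    exact hyI
  have e := LinearEquiv.ofBijective ((psi K m n r).toLinearMap.submoduleMap Qd)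
    ⟨hinj, LinearMap.submoduleMap_surjective _ _⟩
  rw [LinearEquiv.finrank_eq e, hmap]

lemma deg_card {α : Type*} (f : α →₀ ℕ) : f.degree = Multiset.card f.toMultiset := by
  rw [Finsupp.card_toMultiset]
  rfl

lemma degree_mar1 (μ : (Fin m × Fin n × Fin r) →₀ ℕ) : (mar1 μ).degree = μ.degree := by
  rw [deg_card, deg_card, ← marginal_multiset1, Multiset.card_map]

lemma degree_mar2 (μ : (Fin m × Fin n × Fin r) →₀ ℕ) : (mar2 μ).degree = μ.degree := by
  rw [deg_card, deg_card, ← marginal_multiset2, Multiset.card_map]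

lemma degree_mar3 (μ : (Fin m × Fin n × Fin r) →₀ ℕ) : (mar3 μ).degree = μ.degree := by
  rw [deg_card, deg_card, ← marginal_multiset3, Multiset.card_map]

lemma exists_mu {d : ℕ} (a : Fin m →₀ ℕ) (b : Fin n →₀ ℕ) (c : Fin r →₀ ℕ)
    (ha : a.degree = d) (hb : b.degree = d) (hc : c.degree = d) :
    ∃ μ : (Fin m × Fin n × Fin r) →₀ ℕ, mar1 μ = a ∧ mar2 μ = b ∧ mar3 μ = c := by
  classical
  set la := a.toMultiset.toList with hla'
  set lb := b.toMultiset.toList with hlb'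
  set lc := c.toMultiset.toList with hlc'
  have hla : la.length = d := by rw [hla', Multiset.length_toList, ← deg_card, ha]
  have hlb : lb.length = d := by rw [hlb', Multiset.length_toList, ← deg_card, hb]
  have hlc : lc.length = d := by rw [hlc', Multiset.length_toList, ← deg_card, hc]
  have hbc : (lb.zip lc).length = d := by rw [List.length_zip, hlb, hlc, min_self]
  set l := la.zip (lb.zip lc) with hl
  have h1 : l.map Prod.fst = la := List.map_fst_zip (by rw [hla, hbc])
  have h2 : l.map Prod.snd = lb.zip lc := List.map_snd_zip (by rw [hla, hbc])
  have h21 : (lb.zip lc).map Prod.fst = lb := List.map_fst_zip (by rw [hlb, hlc])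
  have h22 : (lb.zip lc).map Prod.snd = lc := List.map_snd_zip (by rw [hlb, hlc])
  refine ⟨Multiset.toFinsupp (l : Multiset (Fin m × Fin n × Fin r)), ?_, ?_, ?_⟩
  · have hM : (mar1 (Multiset.toFinsupp (l : Multiset (Fin m × Fin n × Fin r)))).toMultiset =
        a.toMultiset := by
      rw [← marginal_multiset1, Multiset.toFinsupp_toMultiset, Multiset.map_coe]
      rw [show (l.map fun x => x.1) = l.map Prod.fst from rfl, h1, hla']
      exact Multiset.coe_toList _
    have := congrArg Multiset.toFinsupp hM
    simpa only [Finsupp.toMultiset_toFinsupp] using this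
  · have hM : (mar2 (Multiset.toFinsupp (l : Multiset (Fin m × Fin n × Fin r)))).toMultiset =
        b.toMultiset := by
      rw [← marginal_multiset2, Multiset.toFinsupp_toMultiset, Multiset.map_coe]
      rw [show (l.map fun x => x.2.1) = (l.map Prod.snd).map Prod.fst by rw [List.map_map]; rfl]
      rw [h2, h21, hlb']
      exact Multiset.coe_toList _
    have := congrArg Multiset.toFinsupp hM
    simpa only [Finsupp.toMultiset_toFinsupp] using this
  · have hM : (mar3 (Multiset.toFinsupp (l : Multiset (Fin m × Fin n × Fin r)))).toMultiset =
        c.toMultiset := by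
      rw [← marginal_multiset3, Multiset.toFinsupp_toMultiset, Multiset.map_coe]
      rw [show (l.map fun x => x.2.2) = (l.map Prod.snd).map Prod.snd by rw [List.map_map]; rfl]
      rw [h2, h22, hlc']
      exact Multiset.coe_toList _
    have := congrArg Multiset.toFinsupp hM
    simpa only [Finsupp.toMultiset_toFinsupp] using this

/-- index type for the monomial basis of the image -/
def Idx (m n r d : ℕ) : Type :=
  {a : Fin m →₀ ℕ // a.degree = d} × {b : Fin n →₀ ℕ // b.degree = d} ×
    {c : Fin r →₀ ℕ // c.degree = d}

noncomputable def gFam (K : Type*) [Field K] (m n r d : ℕ) (x : Idx m n r d) :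
    MvPolynomial (Fin m ⊕ Fin n ⊕ Fin r) K :=
  monomial (emb x.1.1 x.2.1.1 x.2.2.1) 1

lemma W_eq_span (d : ℕ) :
    Submodule.map (phi K m n r).toLinearMap
        (homogeneousSubmodule (Fin m × Fin n × Fin r) K d) =
      Submodule.span K (Set.range (gFam K m n r d)) := by
  rw [homogeneousSubmodule_eq_finsupp_supported, AddMonoidAlgebra.supported_eq_span_single,
    Submodule.map_span]
  congr 1
  rw [Set.image_image]
  ext x
  constructor
  · rintro ⟨μ, hμ, rfl⟩
    have hdeg : μ.degree = d := hμ
    refine ⟨⟨⟨mar1 μ, by rw [degree_mar1, hdeg]⟩, ⟨mar2 μ, by rw [degree_mar2, hdeg]⟩,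
      ⟨mar3 μ, by rw [degree_mar3, hdeg]⟩⟩, ?_⟩
    show (monomial (emb (mar1 μ) (mar2 μ) (mar3 μ)) 1 :
        MvPolynomial (Fin m ⊕ Fin n ⊕ Fin r) K) =
      (phi K m n r).toLinearMap (AddMonoidAlgebra.single μ 1)
    rw [AlgHom.toLinearMap_apply, single_eq_monomial, phi_monomial, EE]
  · rintro ⟨⟨⟨a, ha⟩, ⟨b, hb⟩, ⟨c, hc⟩⟩, rfl⟩
    obtain ⟨μ, h1, h2, h3⟩ := exists_mu a b c ha hb hc
    refine ⟨μ, ?_, ?_⟩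
    · show μ.degree = d
      rw [← degree_mar1, h1, ha]
    · show AlgHom.toLinearMap (phi K m n r) (AddMonoidAlgebra.single μ 1) = gFam K m n r d _
      rw [AlgHom.toLinearMap_apply, single_eq_monomial, phi_monomial]
      show monomial (EE μ) 1 = monomial (emb a b c) 1
      rw [EE, h1, h2, h3]


noncomputable def degreeSymEquiv (α : Type*) [DecidableEq α] (d : ℕ) :
    {f : α →₀ ℕ // f.degree = d} ≃ Sym α d where
  toFun f := ⟨f.1.toMultiset, by rw [← deg_card]; exact f.2⟩
  invFun s := ⟨Multiset.toFinsupp s.1, by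
    rw [deg_card, Multiset.toFinsupp_toMultiset]; exact s.2⟩
  left_inv f := Subtype.ext (Finsupp.toMultiset_toFinsupp f.1)
  right_inv s := Subtype.ext (Multiset.toFinsupp_toMultiset s.1)

noncomputable instance fintypeDegree (ℓ d : ℕ) : Fintype {f : Fin ℓ →₀ ℕ // f.degree = d} :=
  Fintype.ofEquiv _ (degreeSymEquiv (Fin ℓ) d).symm

lemma card_degree (ℓ d : ℕ) (h : 0 < ℓ) :
    Fintype.card {f : Fin ℓ →₀ ℕ // f.degree = d} = (ℓ - 1 + d).choose d := by
  rw [Fintype.card_congr (degreeSymEquiv (Fin ℓ) d), Sym.card_sym_eq_choose, Fintype.card_fin]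
  congr 1
  omega

noncomputable instance fintypeIdx (m n r d : ℕ) : Fintype (Idx m n r d) := by
  unfold Idx; infer_instance

lemma card_Idx (d : ℕ) (hm : 0 < m) (hn : 0 < n) (hr : 0 < r) :
    Fintype.card (Idx m n r d) =
      (m - 1 + d).choose d * ((n - 1 + d).choose d * (r - 1 + d).choose d) := by
  show Fintype.card ({a : Fin m →₀ ℕ // a.degree = d} × {b : Fin n →₀ ℕ // b.degree = d} ×
    {c : Fin r →₀ ℕ // c.degree = d}) = _
  rw [Fintype.card_prod, Fintype.card_prod, card_degree m d hm, card_degree n d hn,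
    card_degree r d hr]

lemma gFam_linearIndependent (d : ℕ) : LinearIndependent K (gFam K m n r d) := by
  have h : gFam K m n r d = (basisMonomials (Fin m ⊕ Fin n ⊕ Fin r) K) ∘
      (fun x : Idx m n r d => emb x.1.1 x.2.1.1 x.2.2.1) := by
    funext x
    rw [Function.comp_apply, coe_basisMonomials]
    rfl
  rw [h]
  refine (basisMonomials (Fin m ⊕ Fin n ⊕ Fin r) K).linearIndependent.comp _ ?_
  rintro ⟨⟨a, ha⟩, ⟨b, hb⟩, ⟨c, hc⟩⟩ ⟨⟨a', ha'⟩, ⟨b', hb'⟩, ⟨c', hc'⟩⟩ h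
  obtain ⟨e1, e2, e3⟩ := emb_inj h
  subst e1; subst e2; subst e3
  rfl

lemma finrank_W (d : ℕ) (hm : 0 < m) (hn : 0 < n) (hr : 0 < r) :
    Module.finrank K (Submodule.map (phi K m n r).toLinearMap
      (homogeneousSubmodule (Fin m × Fin n × Fin r) K d)) =
      (m - 1 + d).choose d * ((n - 1 + d).choose d * (r - 1 + d).choose d) := by
  rw [W_eq_span, finrank_span_eq_card (gFam_linearIndependent d),
    card_Idx d hm hn hr]

end DD


/-- The toric map `φ` sending `X (i,j,k)` to `x_i y_j z_k`. -/

theorem stmt_8 (K : Type*) [Field K] (m n r : ℕ) (hm : 0 < m) (hn : 0 < n) (hr : 0 < r)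
    (d : ℕ) :
    Module.finrank K
      (Submodule.map (Ideal.Quotient.mkₐ K (ddIdeal K m n r)).toLinearMap
        (homogeneousSubmodule (Fin m × Fin n × Fin r) K d)) =
      (m - 1 + d).choose d * (n - 1 + d).choose d * (r - 1 + d).choose d := by
  rw [DD.finrank_Q_eq d, DD.finrank_W d hm hn hr, mul_assoc]
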